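/- Second derivative of the Cauchy integral operator at the identity (evaluation D²𝒞(w)[conj(w)^{m−1}, conj(w)^{m−1}](conj(w)) = 0). Let w ∈ ℂ with |w| = 1 and let m ∈ ℕ with m ≥ 2. Then (2/(2πi)) ∮_{|τ|=1} ((conj(τ) − conj(w))(conj(τ)^{m−1} − conj(w)^{m−1})²/(τ − w)³) dτ + ((2(m−1))/(2πi)) ∮_{|τ|=1} ((conj(τ) − conj(w))(conj(τ)^{m−1} − conj(w)^{m−1})/((τ − w)²·τ^m)) dτ = 0. -/

import Mathlib

open ComplexConjugate

noncomputable section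

/-- The constant `2πi`. -/
def twoPiI : ℂ := ((2 * Real.pi : ℝ) : ℂ) * Complex.I

/-- On the unit circle, conjugation is inversion. -/
lemma conj_eq_inv_of_norm_one {z : ℂ} (hz : ‖z‖ = 1) : conj z = z⁻¹ := by
  have h : z * conj z = 1 := by
    rw [Complex.mul_conj]
    norm_cast
    rw [Complex.normSq_eq_norm_sq, hz]; norm_num
  exact (eq_inv_of_mul_eq_one_left (by rw [mul_comm] at h; exact h)).symm ▸ rfl

open Finset in
/-- A circle integral of a finite sum is the sum of the circle integrals. -/
lemma circleIntegral_finset_sum {ι : Type*} (s : Finset ι) (f : ι → ℂ → ℂ)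
    (h : ∀ i ∈ s, CircleIntegrable (f i) 0 1) :
    (∮ τ in C(0, 1), ∑ i ∈ s, f i τ) = ∑ i ∈ s, ∮ τ in C(0, 1), f i τ := by
  simp only [circleIntegral, Finset.smul_sum]
  exact intervalIntegral.integral_finset_sum fun i hi => (circleIntegrable_iff 1).mp (h i hi)

open Finset in
/-- A finite sum of Laurent monomials `c i * τ ^ e i` with `e i ≠ -1` has zero circle
integral. -/
lemma circleIntegral_sum_zpow_eq_zero {ι : Type*} (s : Finset ι) (c : ι → ℂ) (e : ι → ℤ)
    (he : ∀ i ∈ s, e i ≠ -1) :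
    (∮ τ in C(0, 1), ∑ i ∈ s, c i * τ ^ (e i)) = 0 := by
  have hint : ∀ i ∈ s, CircleIntegrable (fun τ : ℂ => c i * τ ^ (e i)) 0 1 := by
    intro i _
    refine ContinuousOn.circleIntegrable zero_le_one ?_
    refine continuousOn_const.mul fun τ hτ => ?_
    have hτ0 : τ ≠ 0 := by
      intro h; rw [h] at hτ; simp at hτ
    exact (continuousAt_zpow₀ τ (e i) (Or.inl hτ0)).continuousWithinAt
  rw [circleIntegral_finset_sum s _ hint]
  refine Finset.sum_eq_zero fun i hi => ?_
  have h0 : (∮ τ in C(0, 1), τ ^ (e i)) = 0 := by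
    have := circleIntegral.integral_sub_zpow_of_ne (he i hi) 0 0 1
    simpa using this
  calc (∮ τ in C(0, 1), c i * τ ^ (e i)) = c i • ∮ τ in C(0, 1), τ ^ (e i) := by
        simp only [← smul_eq_mul, circleIntegral.integral_smul]
    _ = 0 := by rw [h0, smul_zero]

/-- Congruence for circle integrals away from a single point of the circle. -/
lemma circleIntegral_congr_off_point {f g : ℂ → ℂ} {w : ℂ}
    (h : ∀ τ ∈ Metric.sphere (0 : ℂ) 1, τ ≠ w → f τ = g τ) :
    (∮ τ in C(0, 1), f τ) = ∮ τ in C(0, 1), g τ := by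
  have hc : (circleMap 0 1 ⁻¹' {w}).Countable :=
    (Set.countable_singleton _).preimage_circleMap 0 one_ne_zero
  refine intervalIntegral.integral_congr_ae ((hc.ae_notMem _).mono fun θ hθ _ => ?_)
  change circleMap 0 1 θ ≠ w at hθ
  simp only [h _ (circleMap_mem_sphere (0 : ℂ) zero_le_one θ) hθ]

open Finset in
/-- The first integral vanishes. -/
lemma first_integral_zero (w : ℂ) (hw : ‖w‖ = 1) (k : ℕ) :
    (∮ τ in C(0, 1),
      (conj τ - conj w) * (conj τ ^ k - conj w ^ k) ^ 2 / (τ - w) ^ 3) = 0 := by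
  have hw0 : w ≠ 0 := by intro h; rw [h] at hw; simp at hw
  have hcw : conj w = w⁻¹ := conj_eq_inv_of_norm_one hw
  rw [circleIntegral_congr_off_point
    (g := fun τ => ∑ p ∈ range k ×ˢ range k,
      (-(w ^ (k - 1 - p.1) * w ^ (k - 1 - p.2) * (w ^ (2 * k + 1))⁻¹)) *
        τ ^ ((p.1 : ℤ) + (p.2 : ℤ) - (2 * (k : ℤ) + 1)))]
  · refine circleIntegral_sum_zpow_eq_zero _ _ _ fun p hp => ?_
    simp only [mem_product, mem_range] at hp
    omega
  · intro τ hτ hτw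
    have hτ1 : ‖τ‖ = 1 := by simpa using hτ
    have hτ0 : τ ≠ 0 := by intro h; rw [h] at hτ1; simp at hτ1
    have hcτ : conj τ = τ⁻¹ := conj_eq_inv_of_norm_one hτ1
    have hτw' : τ - w ≠ 0 := sub_ne_zero.mpr hτw
    set S : ℂ := ∑ i ∈ range k, τ ^ i * w ^ (k - 1 - i) with hSdef
    have hS : S * (τ - w) = τ ^ k - w ^ k := geom_sum₂_mul τ w k
    have h2 : (τ⁻¹) ^ k - (w⁻¹) ^ k = -(S * (τ - w)) * (τ ^ k)⁻¹ * (w ^ k)⁻¹ := by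
      rw [hS, inv_pow, inv_pow]; field_simp; ring
    have h1 : τ⁻¹ - w⁻¹ = -(τ - w) * τ⁻¹ * w⁻¹ := by field_simp; ring
    have stepA : (conj τ - conj w) * (conj τ ^ k - conj w ^ k) ^ 2 / (τ - w) ^ 3 =
        S * S * (-(((τ : ℂ) ^ (2 * k + 1))⁻¹ * ((w : ℂ) ^ (2 * k + 1))⁻¹)) := by
      rw [hcτ, hcw, h1, h2, div_eq_iff (pow_ne_zero 3 hτw')]
      field_simp
      ring
    rw [stepA, Finset.sum_product]
    have hterm : ∀ i ∈ range k, ∀ j ∈ range k,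
        (-(w ^ (k - 1 - i) * w ^ (k - 1 - j) * (w ^ (2 * k + 1))⁻¹)) *
            τ ^ ((i : ℤ) + (j : ℤ) - (2 * (k : ℤ) + 1)) =
          (τ ^ i * w ^ (k - 1 - i)) * (τ ^ j * w ^ (k - 1 - j)) *
            (-(((τ : ℂ) ^ (2 * k + 1))⁻¹ * ((w : ℂ) ^ (2 * k + 1))⁻¹)) := by
      intro i _ j _
      have hz : τ ^ ((i : ℤ) + (j : ℤ) - (2 * (k : ℤ) + 1)) =
          τ ^ i * τ ^ j * ((τ : ℂ) ^ (2 * k + 1))⁻¹ := by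
        rw [zpow_sub₀ hτ0, zpow_add₀ hτ0, zpow_natCast, zpow_natCast]
        norm_cast
      rw [hz]; ring
    calc S * S * (-(((τ : ℂ) ^ (2 * k + 1))⁻¹ * ((w : ℂ) ^ (2 * k + 1))⁻¹)) =
        ∑ i ∈ range k, ∑ j ∈ range k,
          (τ ^ i * w ^ (k - 1 - i)) * (τ ^ j * w ^ (k - 1 - j)) *
            (-(((τ : ℂ) ^ (2 * k + 1))⁻¹ * ((w : ℂ) ^ (2 * k + 1))⁻¹)) := by
          rw [hSdef, Finset.sum_mul_sum]
          simp only [Finset.sum_mul]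
      _ = ∑ i ∈ range k, ∑ j ∈ range k,
          (-(w ^ (k - 1 - i) * w ^ (k - 1 - j) * (w ^ (2 * k + 1))⁻¹)) *
            τ ^ ((i : ℤ) + (j : ℤ) - (2 * (k : ℤ) + 1)) := by
          refine Finset.sum_congr rfl fun i hi => Finset.sum_congr rfl fun j hj => ?_
          exact (hterm i hi j hj).symm

open Finset in
/-- The second integral vanishes. -/
lemma second_integral_zero (w : ℂ) (hw : ‖w‖ = 1) (k : ℕ) :
    (∮ τ in C(0, 1),
      (conj τ - conj w) * (conj τ ^ k - conj w ^ k) / ((τ - w) ^ 2 * τ ^ (k + 1))) = 0 := by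
  have hw0 : w ≠ 0 := by intro h; rw [h] at hw; simp at hw
  have hcw : conj w = w⁻¹ := conj_eq_inv_of_norm_one hw
  rw [circleIntegral_congr_off_point
    (g := fun τ => ∑ i ∈ range k,
      (w ^ (k - 1 - i) * (w ^ (k + 1))⁻¹) * τ ^ ((i : ℤ) - (2 * (k : ℤ) + 2)))]
  · refine circleIntegral_sum_zpow_eq_zero _ _ _ fun i hi => ?_
    simp only [mem_range] at hi
    omega
  · intro τ hτ hτw
    have hτ1 : ‖τ‖ = 1 := by simpa using hτ
    have hτ0 : τ ≠ 0 := by intro h; rw [h] at hτ1; simp at hτ1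
    have hcτ : conj τ = τ⁻¹ := conj_eq_inv_of_norm_one hτ1
    have hτw' : τ - w ≠ 0 := sub_ne_zero.mpr hτw
    set S : ℂ := ∑ i ∈ range k, τ ^ i * w ^ (k - 1 - i) with hSdef
    have hS : S * (τ - w) = τ ^ k - w ^ k := geom_sum₂_mul τ w k
    have h2 : (τ⁻¹) ^ k - (w⁻¹) ^ k = -(S * (τ - w)) * (τ ^ k)⁻¹ * (w ^ k)⁻¹ := by
      rw [hS, inv_pow, inv_pow]; field_simp; ring
    have h1 : τ⁻¹ - w⁻¹ = -(τ - w) * τ⁻¹ * w⁻¹ := by field_simp; ring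
    have stepA : (conj τ - conj w) * (conj τ ^ k - conj w ^ k) /
        ((τ - w) ^ 2 * τ ^ (k + 1)) =
        S * (((τ : ℂ) ^ (2 * k + 2))⁻¹ * ((w : ℂ) ^ (k + 1))⁻¹) := by
      rw [hcτ, hcw, h1, h2,
        div_eq_iff (mul_ne_zero (pow_ne_zero 2 hτw') (pow_ne_zero (k + 1) hτ0))]
      field_simp
      ring
    rw [stepA, hSdef, Finset.sum_mul]
    refine Finset.sum_congr rfl fun i hi => ?_
    have hz : τ ^ ((i : ℤ) - (2 * (k : ℤ) + 2)) = τ ^ i * ((τ : ℂ) ^ (2 * k + 2))⁻¹ := by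
      rw [zpow_sub₀ hτ0, zpow_natCast]
      norm_cast
    rw [hz]; ring

/-- **Second derivative of the Cauchy integral operator at the identity**:
the evaluation `D²𝒞(w)[conj(w)^{m−1}, conj(w)^{m−1}](conj w) = 0`. -/
theorem cauchy_operator_second_derivative_evaluation_conj (w : ℂ) (hw : ‖w‖ = 1)
    (m : ℕ) (hm : 2 ≤ m) :
    (2 / twoPiI) *
        (∮ τ in C(0, 1),
          (conj τ - conj w) * (conj τ ^ (m - 1) - conj w ^ (m - 1)) ^ 2 / (τ - w) ^ 3) +
      ((2 * ((m : ℂ) - 1)) / twoPiI) *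
        (∮ τ in C(0, 1),
          (conj τ - conj w) * (conj τ ^ (m - 1) - conj w ^ (m - 1)) /
            ((τ - w) ^ 2 * τ ^ m)) = 0 := by
  have hmk : m = (m - 1) + 1 := by omega
  have h1 := first_integral_zero w hw (m - 1)
  have h2 := second_integral_zero w hw (m - 1)
  rw [← hmk] at h2
  rw [h1, h2, mul_zero, mul_zero, add_zero]
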